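/- Instability of strict saddles under the mirror map: let x̄ be a critical point of f ∈ C²(ℝⁿ) with λ_min(∇²f(x̄)) < 0, and define F(x) = (∇ψ)⁻¹(∇ψ(x) - γ∇f(x)) where ψ(x)=‖x‖⁴/4+‖x‖²/2 and γ > 0. Then F(x̄) = x̄ and the Jacobian DF(x̄) = Id - γ ∇²ψ(x̄)⁻¹ ∇²f(x̄) has an eigenvalue of magnitude strictly greater than 1. -/

import Mathlib

open scoped RealInnerProductSpace

noncomputable def psiEnt {n : ℕ} (x : EuclideanSpace ℝ (Fin n)) : ℝ :=
  ‖x‖ ^ 4 / 4 + ‖x‖ ^ 2 / 2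

open Function

/-!
Since `∇ψ x = (‖x‖² + 1) x` is injective and `∇f x̄ = 0`, the map `F` fixes `x̄`, and the inverse
function theorem for `∇ψ` gives `DF(x̄) = H⁻¹ (H - γ A)` with `H = ∇²ψ(x̄)` positive definite and
`A = ∇²f(x̄)` symmetric. Minimising the Rayleigh quotient `⟪A w, w⟫ / ⟪H w, w⟫` yields a solution of
`A w = μ H w` with `μ < 0`, because `⟪A v, v⟫ < 0` for some `v`; then `DF(x̄) w = (1 - γ μ) w` and
`1 - γ μ > 1`.
-/

section InverseComposition

variable {𝕜 : Type*} [NontriviallyNormedField 𝕜]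
  {E : Type*} [NormedAddCommGroup E] [NormedSpace 𝕜 E] [CompleteSpace E] [Nonempty E]
  {F : Type*} [NormedAddCommGroup F] [NormedSpace 𝕜 F]

theorem HasStrictFDerivAt.hasFDerivAt_invFun_comp {Φ G : E → F} {Φ' : E ≃L[𝕜] F}
    {G' : E →L[𝕜] F} {x : E} (hΦinj : Injective Φ) (hΦ : HasStrictFDerivAt Φ (Φ' : E →L[𝕜] F) x)
    (hG : HasFDerivAt G G' x) (hGx : G x = Φ x) :
    HasFDerivAt (fun y => invFun Φ (G y)) ((Φ'.symm : F →L[𝕜] E).comp G') x := by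
  have hinv : HasFDerivAt (hΦ.localInverse Φ Φ' x) (Φ'.symm : F →L[𝕜] E) (G x) :=
    hGx ▸ hΦ.to_localInverse.hasFDerivAt
  refine (hinv.comp x hG).congr_of_eventuallyEq ?_
  have hright : ∀ᶠ y in nhds x, Φ (hΦ.localInverse Φ Φ' x (G y)) = G y :=
    hG.continuousAt.eventually (hGx ▸ hΦ.eventually_right_inverse)
  filter_upwards [hright] with y hy
  conv_lhs => rw [← hy]
  exact leftInverse_invFun hΦinj _

end InverseComposition

section Gradient

variable {E : Type*} [NormedAddCommGroup E] [InnerProductSpace ℝ E] [CompleteSpace E]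
  {f : E → ℝ}

theorem fderiv_gradient_apply (x u : E) :
    fderiv ℝ (gradient f) x u = (InnerProductSpace.toDual ℝ E).symm (fderiv ℝ (fderiv ℝ f) x u) :=
  congrArg (· u) ((InnerProductSpace.toDual ℝ E).symm.comp_fderiv (f := fderiv ℝ f))

theorem ContDiffAt.isSymmetric_fderiv_gradient {x : E} (hf : ContDiffAt ℝ 2 f x) :
    (fderiv ℝ (gradient f) x : E →ₗ[ℝ] E).IsSymmetric := by
  intro u w
  simp only [ContinuousLinearMap.coe_coe, fderiv_gradient_apply,
    InnerProductSpace.toDual_symm_apply]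
  rw [real_inner_comm, InnerProductSpace.toDual_symm_apply]
  exact (hf.isSymmSndFDerivAt (by simp)) u w

theorem ContDiff.differentiable_gradient (hf : ContDiff ℝ 2 f) : Differentiable ℝ (gradient f) :=
  (InnerProductSpace.toDual ℝ E).symm.differentiable.comp
    ((hf.fderiv_right le_rfl).differentiable one_ne_zero)

end Gradient

section GeneralizedEigenvalue

variable {E : Type*} [NormedAddCommGroup E] [InnerProductSpace ℝ E]

theorem LinearMap.injective_of_inner_apply_self_pos {H : E →ₗ[ℝ] E}
    (hH : ∀ x ≠ 0, 0 < ⟪H x, x⟫) : Injective H := by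
  refine (injective_iff_map_eq_zero H).2 fun x hx => ?_
  by_contra hx0
  simpa [hx] using hH x hx0

/-- `E` with the inner product `⟪H x, y⟫`. -/
def WithOpInner (_H : E →ₗ[ℝ] E) : Type _ := E

namespace WithOpInner

variable {H : E →ₗ[ℝ] E}

instance : AddCommGroup (WithOpInner H) := inferInstanceAs (AddCommGroup E)

instance : Module ℝ (WithOpInner H) := inferInstanceAs (Module ℝ E)

instance [FiniteDimensional ℝ E] : FiniteDimensional ℝ (WithOpInner H) :=
  inferInstanceAs (FiniteDimensional ℝ E)

def equiv (H : E →ₗ[ℝ] E) : WithOpInner H ≃ₗ[ℝ] E := LinearEquiv.refl ℝ E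

@[reducible] def core (hH : H.IsSymmetric) (hpos : ∀ x ≠ 0, 0 < ⟪H x, x⟫) :
    InnerProductSpace.Core ℝ (WithOpInner H) where
  inner x y := ⟪H (equiv H x), equiv H y⟫
  conj_inner_symm x y := by simp [hH (equiv H y), real_inner_comm]
  re_inner_nonneg x := by
    rcases eq_or_ne (equiv H x) 0 with hx | hx
    · simp [hx]
    · exact (hpos _ hx).le
  definite x hx := by
    by_contra hx0
    exact (hpos _ ((equiv H).map_ne_zero_iff.2 hx0)).ne' hx
  add_left x y z := by simp [inner_add_left]
  smul_left x y r := by simp [real_inner_smul_left]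

end WithOpInner

theorem LinearMap.IsSymmetric.exists_generalized_eigenvector [FiniteDimensional ℝ E]
    {H A : E →ₗ[ℝ] E} (hH : H.IsSymmetric) (hpos : ∀ x ≠ 0, 0 < ⟪H x, x⟫)
    (hA : A.IsSymmetric) {v : E} (hv : v ≠ 0) :
    ∃ (μ : ℝ) (w : E), w ≠ 0 ∧ A w = μ • H w ∧ μ * ⟪H v, v⟫ ≤ ⟪A v, v⟫ := by
  let c := WithOpInner.core hH hpos
  let e := WithOpInner.equiv H
  let _ := c.toNormedAddCommGroup
  let _ : InnerProductSpace ℝ (WithOpInner H) := InnerProductSpace.ofCore c.toCore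
  have hinner : ∀ x y : WithOpInner H, inner ℝ x y = ⟪H (e x), e y⟫ := fun _ _ => rfl
  have : Nontrivial (WithOpInner H) := ⟨⟨e.symm v, 0, by simpa using hv⟩⟩
  let Hequiv := LinearEquiv.ofInjectiveEndo H (H.injective_of_inner_apply_self_pos hpos)
  -- `A w = μ H w` is the eigenproblem of `P = H⁻¹ A`, which is symmetric for `⟪H x, y⟫`
  let P : WithOpInner H →ₗ[ℝ] WithOpInner H :=
    e.symm.toLinearMap ∘ₗ Hequiv.symm.toLinearMap ∘ₗ A ∘ₗ e.toLinearMap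
  have hHP : ∀ x, H (e (P x)) = A (e x) := fun x => by
    simp only [P, LinearMap.comp_apply, LinearEquiv.coe_coe, LinearEquiv.apply_symm_apply]
    exact Hequiv.apply_symm_apply _
  have hP : P.IsSymmetric := fun x y => by
    rw [hinner, hinner, hHP, hH, hHP, hA]
  let rayleigh (x : {x : WithOpInner H // x ≠ 0}) : ℝ :=
    RCLike.re (inner ℝ (P x) (x : WithOpInner H)) / ‖(x : WithOpInner H)‖ ^ 2
  obtain ⟨w, hw⟩ := hP.hasEigenvalue_iInf_of_finiteDimensional.exists_hasEigenvector
  refine ⟨⨅ x, rayleigh x, e w, by simpa using hw.2, ?_, ?_⟩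
  · rw [← hHP, hw.apply_eq_smul, map_smul, map_smul]; rfl
  · have hbdd : BddBelow (Set.range rayleigh) :=
      ⟨-‖LinearMap.toContinuousLinearMap P‖, by
        rintro _ ⟨x, rfl⟩
        exact neg_le_of_abs_le ((LinearMap.toContinuousLinearMap P).rayleighQuotient_le_norm x)⟩
    have hnorm : ‖e.symm v‖ ^ 2 = ⟪H v, v⟫ := by
      rw [← real_inner_self_eq_norm_sq]; rfl
    have hv' : rayleigh ⟨e.symm v, by simpa using hv⟩ = ⟪A v, v⟫ / ⟪H v, v⟫ := by
      simp only [rayleigh, RCLike.re_to_real, hinner, hHP, hnorm, LinearEquiv.apply_symm_apply]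
    rw [← le_div_iff₀ (hpos v hv), ← hv']
    exact ciInf_le hbdd _

end GeneralizedEigenvalue

theorem injective_sq_norm_add_one_smul {E : Type*} [NormedAddCommGroup E] [NormedSpace ℝ E] :
    Injective fun x : E => (‖x‖ ^ 2 + 1) • x := by
  intro x y (hxy : (‖x‖ ^ 2 + 1) • x = (‖y‖ ^ 2 + 1) • y)
  have hnorm : (‖x‖ ^ 2 + 1) * ‖x‖ = (‖y‖ ^ 2 + 1) * ‖y‖ := by
    simpa only [norm_smul, Real.norm_eq_abs, abs_of_pos (by positivity : (0:ℝ) < _ ^ 2 + 1)]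
      using congrArg norm hxy
  -- `t ↦ (t ^ 2 + 1) t` is strictly increasing
  have hxy' : ‖x‖ = ‖y‖ := by
    nlinarith [norm_nonneg x, norm_nonneg y, sq_nonneg (‖x‖ - ‖y‖), sq_nonneg (‖x‖ + ‖y‖)]
  rw [hxy'] at hxy
  exact smul_right_injective E (by positivity) hxy

section MirrorMap

variable {E : Type*} [NormedAddCommGroup E] [InnerProductSpace ℝ E]

noncomputable def psiHessian (x : E) : E →L[ℝ] E :=
  (‖x‖ ^ 2 + 1) • ContinuousLinearMap.id ℝ E + (2 • innerSL ℝ x).smulRight x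

theorem hasStrictFDerivAt_sq_norm_add_one_smul (x : E) :
    HasStrictFDerivAt (fun y : E => (‖y‖ ^ 2 + 1) • y) (psiHessian x) x :=
  ((hasStrictFDerivAt_norm_sq x).add_const 1).smul (hasStrictFDerivAt_id x)

theorem psiHessian_apply (x h : E) :
    psiHessian x h = (‖x‖ ^ 2 + 1) • h + (2 * ⟪x, h⟫) • x := by
  simp [psiHessian]

theorem isSymmetric_psiHessian (x : E) : (psiHessian x : E →ₗ[ℝ] E).IsSymmetric := by
  intro h k
  simp only [ContinuousLinearMap.coe_coe, psiHessian_apply, inner_add_left, inner_add_right,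
    real_inner_smul_left, real_inner_smul_right, real_inner_comm h x]
  ring

theorem inner_psiHessian_self_pos (x : E) {h : E} (hh : h ≠ 0) : 0 < ⟪psiHessian x h, h⟫ := by
  have hh' : 0 < ‖h‖ := norm_pos_iff.2 hh
  rw [psiHessian_apply, inner_add_left, real_inner_smul_left, real_inner_smul_left,
    real_inner_self_eq_norm_sq]
  nlinarith [sq_nonneg ⟪x, h⟫, sq_nonneg ‖x‖]

end MirrorMap

theorem hasGradientAt_psiEnt {n : ℕ} (x : EuclideanSpace ℝ (Fin n)) :
    HasGradientAt psiEnt ((‖x‖ ^ 2 + 1) • x) x := by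
  have hsq := (hasStrictFDerivAt_norm_sq x).hasFDerivAt
  have hψ : psiEnt = fun y : EuclideanSpace ℝ (Fin n) =>
      (‖y‖ ^ 2) ^ 2 * (1 / 4) + ‖y‖ ^ 2 * (1 / 2) := by
    funext y
    simp only [psiEnt]
    ring
  rw [hasGradientAt_iff_hasFDerivAt, hψ]
  refine (((hsq.pow 2).mul_const (1 / 4 : ℝ)).add (hsq.mul_const (1 / 2 : ℝ))).congr_fderiv ?_
  ext h
  simp only [add_apply, smul_apply, innerSL_apply_apply,
    InnerProductSpace.toDual_apply_apply, real_inner_smul_left, smul_eq_mul]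
  ring

theorem gradient_psiEnt {n : ℕ} :
    gradient (psiEnt (n := n)) = fun x => (‖x‖ ^ 2 + 1) • x :=
  funext fun x => (hasGradientAt_psiEnt x).gradient

/-- Instability of strict saddles under the mirror map: at a critical point `x̄`
of `f` where the Hessian has a strictly negative eigenvalue, the mirror map
`F = (∇ψ)⁻¹ ∘ (∇ψ - γ∇f)` fixes `x̄` and its Jacobian at `x̄` has a real
eigenvalue of magnitude strictly greater than `1`. -/
theorem strict_saddle_unstable_mirror_map {n : ℕ}
    (f : EuclideanSpace ℝ (Fin n) → ℝ) (hf : ContDiff ℝ 2 f)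
    (γ : ℝ) (hγ : 0 < γ)
    (xbar : EuclideanSpace ℝ (Fin n))
    (hcrit : gradient f xbar = 0)
    (hsaddle : ∃ v : EuclideanSpace ℝ (Fin n), ‖v‖ = 1 ∧
      ⟪v, fderiv ℝ (gradient f) xbar v⟫ < 0)
    (F : EuclideanSpace ℝ (Fin n) → EuclideanSpace ℝ (Fin n))
    (hF : F = fun x => Function.invFun (gradient (psiEnt (n := n)))
      (gradient (psiEnt (n := n)) x - γ • gradient f x)) :
    F xbar = xbar ∧
    ∃ (μ : ℝ) (w : EuclideanSpace ℝ (Fin n)), w ≠ 0 ∧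
      fderiv ℝ F xbar w = μ • w ∧ 1 < |μ| := by
  obtain ⟨v, hv1, hv⟩ := hsaddle
  have hv0 : v ≠ 0 := by rintro rfl; simp at hv1
  have hHpos : ∀ h ≠ 0, 0 < ⟪psiHessian xbar h, h⟫ := fun _ => inner_psiHessian_self_pos xbar
  let H : EuclideanSpace ℝ (Fin n) ≃L[ℝ] EuclideanSpace ℝ (Fin n) :=
    (LinearEquiv.ofInjectiveEndo _
      (LinearMap.injective_of_inner_apply_self_pos hHpos)).toContinuousLinearEquiv
  have hΦ : HasStrictFDerivAt (gradient psiEnt) (H : _ →L[ℝ] _) xbar := by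
    rw [gradient_psiEnt]; exact hasStrictFDerivAt_sq_norm_add_one_smul xbar
  have hinj : Injective (gradient (psiEnt (n := n))) :=
    gradient_psiEnt ▸ injective_sq_norm_add_one_smul
  have hG : HasFDerivAt (fun x => gradient psiEnt x - γ • gradient f x) _ xbar :=
    hΦ.hasFDerivAt.sub ((hf.differentiable_gradient xbar).hasFDerivAt.const_smul γ)
  have hGx : gradient psiEnt xbar - γ • gradient f xbar = gradient psiEnt xbar := by
    rw [hcrit, smul_zero, sub_zero]
  subst hF
  refine ⟨by simp only [hGx]; exact leftInverse_invFun hinj xbar, ?_⟩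
  obtain ⟨μ, w, hw0, hAw, hμv⟩ := (isSymmetric_psiHessian xbar).exists_generalized_eigenvector
    hHpos (hf.contDiffAt (x := xbar)).isSymmetric_fderiv_gradient hv0
  simp only [ContinuousLinearMap.coe_coe] at hAw hμv
  have hμ : μ < 0 := by
    nlinarith [hHpos v hv0, real_inner_comm v (fderiv ℝ (gradient f) xbar v)]
  refine ⟨1 - γ * μ, w, hw0, ?_, ?_⟩
  · rw [(hΦ.hasFDerivAt_invFun_comp hinj hG hGx).fderiv]
    have hw : H.symm (fderiv ℝ (gradient f) xbar w) = μ • w := by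
      rw [hAw, map_smul]
      exact congrArg (μ • ·) (H.symm_apply_apply w)
    simp [hw, smul_smul, sub_smul]
  · rw [abs_of_pos (by nlinarith)]; nlinarith
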